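/- Write P_Γ(z, w) = A(z)w² + B(z)w + C(z) as a quadratic in w, where A(z) = (z−t)², B(z) = −2t z² + 2(2(λ+1)t − t² − λ) z − 2λt, and C(z) = t²z² − 2λt z + λ². Then the discriminant satisfies the polynomial identity B(z)² − 4A(z)C(z) = 16 t (t−1)(t−λ) · z (z−1)(z−λ) in ℂ[z]. Consequently, for z₀ ∈ ℂ with z₀ ≠ t, the vertical line z = z₀ is tangent to Γ (i.e. P_Γ(z₀, w) has a double root in w) if and only if z₀ ∈ {0, 1, λ}. -/

import Mathlib

/-- The bidegree `(2,2)` polynomial `P_Γ(z, w)` defining the curve `Γ ⊂ ℙ¹×ℙ¹`. -/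
noncomputable def PGamma (l t z w : ℂ) : ℂ :=
  t ^ 2 * z ^ 2 - 2 * t * z ^ 2 * w + t ^ 2 * w ^ 2 - 2 * t * z * w ^ 2 + z ^ 2 * w ^ 2
    - 2 * l * t * z - 2 * l * t * w + 2 * (2 * (l + 1) * t - t ^ 2 - l) * z * w + l ^ 2

section Field

variable {K : Type*} [Field K] [NeZero (2 : K)] {a b c : K}

theorem exists_quadratic_eq_mul_sub_sq_iff_discrim_eq_zero (ha : a ≠ 0) :
    (∃ x₀, ∀ x, a * (x * x) + b * x + c = a * (x - x₀) ^ 2) ↔ discrim a b c = 0 := by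
  constructor
  · -- `a * (x - x₀) ^ 2` vanishes only at `x₀`, so the quadratic has a unique root.
    rintro ⟨x₀, hx₀⟩
    refine discrim_eq_zero_of_existsUnique ha ⟨x₀, ?_, fun x hx => ?_⟩
    · simp [hx₀]
    · simpa [hx₀, ha, sub_eq_zero] using hx
  · intro hd
    refine ⟨-b / (2 * a), fun x => ?_⟩
    rw [discrim] at hd
    field_simp
    linear_combination -hd

end Field

theorem PGamma_eq_quadratic (l t z w : ℂ) :
    PGamma l t z w = (z - t) ^ 2 * (w * w)
      + (-2 * t * z ^ 2 + 2 * (2 * (l + 1) * t - t ^ 2 - l) * z - 2 * l * t) * w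
      + (t ^ 2 * z ^ 2 - 2 * l * t * z + l ^ 2) := by
  unfold PGamma; ring

theorem discrim_PGamma (l t z : ℂ) :
    discrim ((z - t) ^ 2) (-2 * t * z ^ 2 + 2 * (2 * (l + 1) * t - t ^ 2 - l) * z - 2 * l * t)
        (t ^ 2 * z ^ 2 - 2 * l * t * z + l ^ 2) =
      16 * t * (t - 1) * (t - l) * (z * (z - 1) * (z - l)) := by
  unfold discrim; ring

theorem discriminant_and_vertical_tangents (l t : ℂ)
    (ht0 : t ≠ 0) (ht1 : t ≠ 1) (htl : t ≠ l) :
    (∀ z : ℂ,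
      (-2 * t * z ^ 2 + 2 * (2 * (l + 1) * t - t ^ 2 - l) * z - 2 * l * t) ^ 2
          - 4 * (z - t) ^ 2 * (t ^ 2 * z ^ 2 - 2 * l * t * z + l ^ 2) =
        16 * t * (t - 1) * (t - l) * (z * (z - 1) * (z - l))) ∧
    ∀ z₀ : ℂ, z₀ ≠ t →
      ((∃ w₀ : ℂ, ∀ w : ℂ, PGamma l t z₀ w = (z₀ - t) ^ 2 * (w - w₀) ^ 2) ↔
        z₀ ∈ ({0, 1, l} : Set ℂ)) := by
  refine ⟨discrim_PGamma l t, fun z₀ hz₀ => ?_⟩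
  have hA : (z₀ - t) ^ 2 ≠ 0 := pow_ne_zero 2 (sub_ne_zero.mpr hz₀)
  have hcoef : (16 : ℂ) * t * (t - 1) * (t - l) ≠ 0 := by
    simp [ht0, sub_ne_zero.mpr ht1, sub_ne_zero.mpr htl]
  simp_rw [PGamma_eq_quadratic, exists_quadratic_eq_mul_sub_sq_iff_discrim_eq_zero hA,
    discrim_PGamma, mul_eq_zero_iff_left hcoef]
  simp [sub_eq_zero, or_assoc]
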